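/- Let r, ω, T > 0 satisfy r³ω² = U₀/4 with U₀ = 2√2+1, and let q_k(t) = r(cos(ωt + kπ/2), sin(ωt + kπ/2)) for k = 1,…,4 with unit masses. Then the Lagrangian action ∫₀^T [ (1/2)∑_k‖q̇_k‖² + U(q(t)) ] dt equals (2r²ω² + U₀/r)·T = (3U₀/(2r))·T. If moreover ω = α/T for some α > 0 (the bodies rotate by angle α in time T), then this action equals 3·2^{−1/3}·U₀^{2/3}·T^{1/3}·α^{2/3}. -/

import Mathlib

/-!
Every body of the rotating square moves uniformly on the circle of radius `r`, so its speed is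
`r ω`, and the mutual distances never change: `√2 r` along the four sides and `2 r` along the two
diagonals. Hence the Lagrangian is the constant `2 r² ω² + U₀ / r` with `U₀ = 4 / √2 + 2 / 2`,
and Kepler's relation `r³ ω² = U₀ / 4` makes the kinetic part half the potential one. For the
last identity, `ω = α / T` turns Kepler's relation into `r³ = U₀ T² / (4 α²)`; both sides are
positive and have the same cube `27 U₀² T α² / 2`.
-/

open Real

noncomputable section

def circularMotion (r ω φ t : ℝ) : EuclideanSpace ℝ (Fin 2) :=
  WithLp.toLp 2 ![r * cos (ω * t + φ), r * sin (ω * t + φ)]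

theorem hasDerivAt_circularMotion (r ω φ t : ℝ) :
    HasDerivAt (circularMotion r ω φ)
      (WithLp.toLp 2 ![-(r * ω * sin (ω * t + φ)), r * ω * cos (ω * t + φ)]) t := by
  have hphase : HasDerivAt (fun s => ω * s + φ) ω t := by
    simpa using ((hasDerivAt_id t).const_mul ω).add_const φ
  have hcoord : HasDerivAt (fun s => ![r * cos (ω * s + φ), r * sin (ω * s + φ)])
      ![-(r * ω * sin (ω * t + φ)), r * ω * cos (ω * t + φ)] t := by
    refine hasDerivAt_pi.2 (Fin.forall_fin_two.2 ⟨?_, ?_⟩)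
    · simpa only [Matrix.cons_val_zero] using (hphase.cos.const_mul r).congr_deriv (by ring)
    · simpa only [Matrix.cons_val_one, Matrix.cons_val_zero] using
        (hphase.sin.const_mul r).congr_deriv (by ring)
  exact (EuclideanSpace.equiv (Fin 2) ℝ).symm.toContinuousLinearMap.hasFDerivAt.comp_hasDerivAt
    t hcoord

theorem norm_deriv_circularMotion_sq (r ω φ t : ℝ) :
    ‖deriv (circularMotion r ω φ) t‖ ^ 2 = r ^ 2 * ω ^ 2 := by
  rw [(hasDerivAt_circularMotion r ω φ t).deriv, EuclideanSpace.norm_sq_eq, Fin.sum_univ_two]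
  simp only [Matrix.cons_val_zero, Matrix.cons_val_one, Real.norm_eq_abs, sq_abs]
  linear_combination r ^ 2 * ω ^ 2 * sin_sq_add_cos_sq (ω * t + φ)

theorem norm_sub_circularMotion_sq (r ω φ ψ t : ℝ) :
    ‖circularMotion r ω φ t - circularMotion r ω ψ t‖ ^ 2 = 2 * r ^ 2 * (1 - cos (φ - ψ)) := by
  rw [EuclideanSpace.norm_sq_eq, Fin.sum_univ_two]
  simp only [circularMotion, WithLp.ofLp_sub, Pi.sub_apply, Matrix.cons_val_zero,
    Matrix.cons_val_one, Real.norm_eq_abs, sq_abs]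
  rw [show φ - ψ = (ω * t + φ) - (ω * t + ψ) by ring, cos_sub]
  linear_combination r ^ 2 * sin_sq_add_cos_sq (ω * t + φ) + r ^ 2 * sin_sq_add_cos_sq (ω * t + ψ)

theorem norm_sub_circularMotion {r : ℝ} (hr : 0 ≤ r) (ω φ ψ t : ℝ) :
    ‖circularMotion r ω φ t - circularMotion r ω ψ t‖ = √2 * r * √(1 - cos (φ - ψ)) := by
  rw [← sqrt_sq (norm_nonneg _), norm_sub_circularMotion_sq, mul_comm,
    sqrt_mul' _ (by nlinarith [cos_le_one (φ - ψ)]), sqrt_mul zero_le_two, sqrt_sq hr]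
  ring

def newtonianPotential {n : ℕ} {E : Type*} [NormedAddCommGroup E] (x : Fin n → E) : ℝ :=
  ∑ i, ∑ j, if i < j then ‖x i - x j‖⁻¹ else 0

def rotatingSquare (r ω : ℝ) (k : Fin 4) : ℝ → EuclideanSpace ℝ (Fin 2) :=
  circularMotion r ω (((k : ℕ) + 1) * π / 2)

theorem sum_norm_deriv_rotatingSquare_sq (r ω t : ℝ) :
    ∑ k, ‖deriv (rotatingSquare r ω k) t‖ ^ 2 = 4 * (r ^ 2 * ω ^ 2) := by
  simp [rotatingSquare, norm_deriv_circularMotion_sq]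

theorem newtonianPotential_rotatingSquare {r : ℝ} (hr : 0 < r) (ω t : ℝ) :
    newtonianPotential (fun k => rotatingSquare r ω k t) = (2 * √2 + 1) / r := by
  have hcos : cos (3 * π / 2) = 0 := by
    rw [show 3 * π / 2 = π / 2 + π by ring, cos_add_pi, cos_pi_div_two, neg_zero]
  have hsin : sin (3 * π / 2) = -1 := by
    rw [show 3 * π / 2 = π / 2 + π by ring, sin_add_pi, sin_pi_div_two]
  simp only [newtonianPotential, rotatingSquare, Fin.sum_univ_four, Fin.isValue, Fin.reduceLT,
    lt_self_iff_false, ↓reduceIte, norm_sub_circularMotion hr.le]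
  -- `1 - cos` of the phase difference is `1` for the four sides and `2` for the two diagonals
  norm_num [cos_sub, hcos, hsin, show (1 + 1) * π / 2 = π by ring, show 4 * π / 2 = 2 * π by ring]
  have hsqrt2 : √2 ^ 2 = 2 := sq_sqrt zero_le_two
  field_simp
  linear_combination -(2 * √2 + 1) * hsqrt2

theorem kinetic_add_potential_of_kepler {U₀ r ω : ℝ} (hr : r ≠ 0)
    (hKepler : r ^ 3 * ω ^ 2 = U₀ / 4) :
    2 * r ^ 2 * ω ^ 2 + U₀ / r = 3 * U₀ / (2 * r) := by
  field_simp
  linear_combination 4 * hKepler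

theorem action_eq_rpow_of_kepler {U₀ r ω T α : ℝ} (hr : 0 < r) (hT : 0 < T) (hα : 0 < α)
    (hKepler : r ^ 3 * ω ^ 2 = U₀ / 4) (hω : ω = α / T) :
    3 * U₀ / (2 * r) * T =
      3 * (2:ℝ) ^ (-(1:ℝ)/3) * U₀ ^ ((2:ℝ)/3) * T ^ ((1:ℝ)/3) * α ^ ((2:ℝ)/3) := by
  have hU₀ : 0 ≤ U₀ := by nlinarith [pow_pos hr 3, sq_nonneg ω]
  have rpow_div_three_cube : ∀ {x : ℝ}, 0 ≤ x → ∀ p : ℝ, (x ^ (p / 3)) ^ 3 = x ^ p :=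
    fun hx p => by rw [← rpow_mul_natCast hx]; norm_num
  rw [← pow_left_inj₀ (by positivity) (by positivity) three_ne_zero, mul_pow, mul_pow, mul_pow,
    mul_pow, mul_pow, rpow_div_three_cube zero_le_two, rpow_div_three_cube hU₀,
    rpow_div_three_cube hT.le, rpow_div_three_cube hα.le, rpow_neg_one, rpow_two, rpow_two,
    rpow_one]
  subst hω
  field_simp at hKepler ⊢
  linear_combination -U₀ ^ 2 * hKepler

end

theorem stmt_15_general (r ω T : ℝ) (hr : 0 < r) (hT : 0 < T)
    (U₀ : ℝ) (hU₀ : U₀ = 2 * Real.sqrt 2 + 1)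
    (hKepler : r ^ 3 * ω ^ 2 = U₀ / 4)
    (q : Fin 4 → ℝ → EuclideanSpace ℝ (Fin 2))
    (hq : ∀ (k : Fin 4) (t : ℝ),
      q k t = ![r * Real.cos (ω * t + ((k : ℕ) + 1) * Real.pi / 2),
                r * Real.sin (ω * t + ((k : ℕ) + 1) * Real.pi / 2)]) :
    (∫ t in (0:ℝ)..T, ((1/2) * ∑ k : Fin 4, ‖deriv (q k) t‖ ^ 2 +
        ∑ i : Fin 4, ∑ j : Fin 4, if i < j then ‖q i t - q j t‖⁻¹ else 0)) =
      (2 * r ^ 2 * ω ^ 2 + U₀ / r) * T ∧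
    (2 * r ^ 2 * ω ^ 2 + U₀ / r) * T = 3 * U₀ / (2 * r) * T ∧
    ∀ α : ℝ, 0 < α → ω = α / T →
      (2 * r ^ 2 * ω ^ 2 + U₀ / r) * T =
        3 * (2:ℝ) ^ (-(1:ℝ)/3) * U₀ ^ ((2:ℝ)/3) * T ^ ((1:ℝ)/3) * α ^ ((2:ℝ)/3) := by
  have hq_square : q = rotatingSquare r ω := by
    funext k t
    exact WithLp.ofLp_injective _ (hq k t)
  have hLagrangian : ∀ t, (1/2) * ∑ k, ‖deriv (q k) t‖ ^ 2 + newtonianPotential (q · t) =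
      2 * r ^ 2 * ω ^ 2 + U₀ / r := fun t => by
    rw [hq_square, sum_norm_deriv_rotatingSquare_sq, newtonianPotential_rotatingSquare hr, hU₀]
    ring
  have hvirial := kinetic_add_potential_of_kepler hr.ne' hKepler
  refine ⟨?_, by rw [hvirial], fun α hα hω => ?_⟩
  · calc _ = ∫ _ in (0:ℝ)..T, 2 * r ^ 2 * ω ^ 2 + U₀ / r :=
          intervalIntegral.integral_congr fun t _ => hLagrangian t
      _ = _ := by rw [intervalIntegral.integral_const, smul_eq_mul, sub_zero, mul_comm]
  · rw [hvirial]
    exact action_eq_rpow_of_kepler hr hT hα hKepler hω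

theorem stmt_15 (r ω T : ℝ) (hr : 0 < r) (hω : 0 < ω) (hT : 0 < T)
    (U₀ : ℝ) (hU₀ : U₀ = 2 * Real.sqrt 2 + 1)
    (hKepler : r ^ 3 * ω ^ 2 = U₀ / 4)
    (q : Fin 4 → ℝ → EuclideanSpace ℝ (Fin 2))
    (hq : ∀ (k : Fin 4) (t : ℝ),
      q k t = ![r * Real.cos (ω * t + ((k : ℕ) + 1) * Real.pi / 2),
                r * Real.sin (ω * t + ((k : ℕ) + 1) * Real.pi / 2)]) :
    (∫ t in (0:ℝ)..T, ((1/2) * ∑ k : Fin 4, ‖deriv (q k) t‖ ^ 2 +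
        ∑ i : Fin 4, ∑ j : Fin 4, if i < j then ‖q i t - q j t‖⁻¹ else 0)) =
      (2 * r ^ 2 * ω ^ 2 + U₀ / r) * T ∧
    (2 * r ^ 2 * ω ^ 2 + U₀ / r) * T = 3 * U₀ / (2 * r) * T ∧
    ∀ α : ℝ, 0 < α → ω = α / T →
      (2 * r ^ 2 * ω ^ 2 + U₀ / r) * T =
        3 * (2:ℝ) ^ (-(1:ℝ)/3) * U₀ ^ ((2:ℝ)/3) * T ^ ((1:ℝ)/3) * α ^ ((2:ℝ)/3) :=
  stmt_15_general r ω T hr hT U₀ hU₀ hKepler q hq
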